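/- For any matrices X, Y ∈ M_n(ℂ), the block matrix [[|X*|+|Y*|, X+Y],[X*+Y*, |X|+|Y|]] is positive semidefinite. -/

import Mathlib

/-!
Put `a = X*X`, `B = a^{1/4}` and `A = a^{-1/4} X*`, where `a^{-1/4}` is taken on the support of
`a` and is `0` on its kernel. Since `a` and `X` have the same kernel, `X p = X` for the support
projection `p` of `a`; with this, `A*B = X`, `B*B = |X|`, and `(A*A)² = X X*`, so `A*A = |X*|` by
uniqueness of positive square roots. Hence `[[|X*|, X], [X*, |X|]] = [A B]* [A B] ≥ 0`, and the
theorem is the sum of these block matrices for `X` and `Y`.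
-/

open Matrix
open scoped ComplexOrder

open scoped MatrixOrder in
/-- The absolute value `|X| = (X* X)^{1/2}` of a complex matrix. -/
noncomputable def matAbs {n : ℕ} (X : Matrix (Fin n) (Fin n) ℂ) : Matrix (Fin n) (Fin n) ℂ :=
  CFC.sqrt (Xᴴ * X)

namespace Matrix

open scoped MatrixOrder

variable {m : Type*} [Fintype m] {𝕜 : Type*} [RCLike 𝕜]

theorem posSemidef_fromBlocks_conjTranspose_mul {n p : Type*} [Fintype n] [Fintype p]
    (A : Matrix m n 𝕜) (B : Matrix m p 𝕜) :
    (fromBlocks (Aᴴ * A) (Aᴴ * B) (Bᴴ * A) (Bᴴ * B)).PosSemidef := by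
  rw [← fromRows_mul_fromCols, ← conjTranspose_fromCols_eq_fromRows_conjTranspose]
  exact posSemidef_conjTranspose_mul_self _

variable [DecidableEq m]

theorem continuousOn_real_spectrum (a : Matrix m m 𝕜) (f : ℝ → ℝ) :
    ContinuousOn f (spectrum ℝ a) :=
  a.finite_real_spectrum.continuousOn f

theorem conjTranspose_cfc (a : Matrix m m 𝕜) (f : ℝ → ℝ) : (cfc f a)ᴴ = cfc f a :=
  (cfc_predicate f a).star_eq

theorem mul_cfc_conjTranspose_mul_self_eq_self (X : Matrix m m 𝕜) {f : ℝ → ℝ}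
    (hf : ∀ t ∈ spectrum ℝ (Xᴴ * X), t ≠ 0 → f t = 1) :
    X * cfc f (Xᴴ * X) = X := by
  have ha : IsSelfAdjoint (Xᴴ * X) := isHermitian_conjTranspose_mul_self X
  have hc := continuousOn_real_spectrum (Xᴴ * X)
  have hsub : cfc (fun t => 1 - f t) (Xᴴ * X) = 1 - cfc f (Xᴴ * X) := by
    rw [cfc_sub _ _ _ (hc _) (hc _), cfc_const_one ℝ _]
  have hmul_eq_zero : Xᴴ * X * cfc (fun t => 1 - f t) (Xᴴ * X) = 0 := by
    nth_rw 1 [← cfc_id' ℝ (Xᴴ * X)]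
    rw [← cfc_mul _ _ _ (hc _) (hc _), ← cfc_zero ℝ (Xᴴ * X)]
    refine cfc_congr fun t ht => ?_
    by_cases h0 : t = 0
    · simp [h0]
    · simp [hf t ht h0]
  suffices X * (1 - cfc f (Xᴴ * X)) = 0 by rwa [mul_sub, mul_one, sub_eq_zero, eq_comm] at this
  rw [← hsub, ← conjTranspose_mul_self_eq_zero, conjTranspose_mul, conjTranspose_cfc, mul_assoc,
    ← mul_assoc Xᴴ, hmul_eq_zero, mul_zero]

theorem exists_conjTranspose_mul_eq_abs (X : Matrix m m 𝕜) :
    ∃ A B : Matrix m m 𝕜, Aᴴ * A = CFC.abs Xᴴ ∧ Aᴴ * B = X ∧ Bᴴ * B = CFC.abs X := by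
  set a := Xᴴ * X
  have ha : 0 ≤ a := (posSemidef_conjTranspose_mul_self X).nonneg
  have hc := continuousOn_real_spectrum a
  have hpow : ∀ t ∈ spectrum ℝ a, √√t * √√t * (√√t * √√t) = t := fun t ht => by
    rw [Real.mul_self_sqrt (Real.sqrt_nonneg t),
      Real.mul_self_sqrt (spectrum_nonneg_of_nonneg ha ht)]
  have hpos : ∀ t ∈ spectrum ℝ a, t ≠ 0 → √√t ≠ 0 := fun t ht h0 h =>
    h0 (by rw [← hpow t ht, h, mul_zero, mul_zero])
  set q : ℝ → ℝ := fun t => √√t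
  -- `(√√0)⁻¹ = 0`, so `cfc g a` is the Moore–Penrose inverse of `a ^ (1/4)`.
  set g : ℝ → ℝ := fun t => (√√t)⁻¹
  refine ⟨cfc g a * Xᴴ, cfc q a, ?_, ?_, ?_⟩
  · have hA : (cfc g a * Xᴴ)ᴴ * (cfc g a * Xᴴ) = X * cfc (fun t => g t * g t) a * Xᴴ := by
      rw [conjTranspose_mul, conjTranspose_conjTranspose, conjTranspose_cfc,
        cfc_mul _ _ _ (hc _) (hc _)]
      noncomm_ring
    refine (CFC.sqrt_unique ?_ (posSemidef_conjTranspose_mul_self _).nonneg).symm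
    rw [star_eq_conjTranspose, conjTranspose_conjTranspose]
    calc (cfc g a * Xᴴ)ᴴ * (cfc g a * Xᴴ) * ((cfc g a * Xᴴ)ᴴ * (cfc g a * Xᴴ))
        = X * (cfc (fun t => g t * g t) a * a * cfc (fun t => g t * g t) a) * Xᴴ := by
          rw [hA]; simp only [a, mul_assoc]
      _ = X * cfc (fun t => g t * g t * t * (g t * g t)) a * Xᴴ := by
          nth_rw 2 [← cfc_id' ℝ a]
          rw [← cfc_mul _ _ _ (hc _) (hc _), ← cfc_mul _ _ _ (hc _) (hc _)]
      _ = X * Xᴴ := by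
          rw [mul_cfc_conjTranspose_mul_self_eq_self X fun t ht h0 => ?_]
          have hr := hpos t ht h0
          nth_rw 3 [← hpow t ht]
          simp only [g]
          field_simp
  · rw [conjTranspose_mul, conjTranspose_conjTranspose, conjTranspose_cfc, mul_assoc,
      ← cfc_mul _ _ _ (hc _) (hc _)]
    exact mul_cfc_conjTranspose_mul_self_eq_self X fun t ht h0 => inv_mul_cancel₀ (hpos t ht h0)
  · rw [conjTranspose_cfc, ← cfc_mul _ _ _ (hc _) (hc _)]
    refine (CFC.sqrt_unique ?_ (cfc_nonneg fun t _ => by positivity)).symm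
    rw [← cfc_mul _ _ _ (hc _) (hc _)]
    change _ = a
    conv_rhs => rw [← cfc_id' ℝ a]
    exact cfc_congr hpow

theorem posSemidef_fromBlocks_abs (X : Matrix m m 𝕜) :
    (fromBlocks (CFC.abs Xᴴ) X Xᴴ (CFC.abs X)).PosSemidef := by
  obtain ⟨A, B, hAA, hAB, hBB⟩ := exists_conjTranspose_mul_eq_abs X
  have hBA : Bᴴ * A = Xᴴ := by rw [← hAB, conjTranspose_mul, conjTranspose_conjTranspose]
  simpa only [hAA, hAB, hBA, hBB] using posSemidef_fromBlocks_conjTranspose_mul A B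

end Matrix

/-- The block matrix `[[|X*|+|Y*|, X+Y],[X*+Y*, |X|+|Y|]]` is positive semidefinite. -/
theorem stmt4 {n : ℕ} (X Y : Matrix (Fin n) (Fin n) ℂ) :
    (Matrix.fromBlocks (matAbs Xᴴ + matAbs Yᴴ) (X + Y) (Xᴴ + Yᴴ)
      (matAbs X + matAbs Y)).PosSemidef := by
  rw [← Matrix.fromBlocks_add]
  exact (posSemidef_fromBlocks_abs X).add (posSemidef_fromBlocks_abs Y)
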